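/- arXiv:1904.10346 — 4 statements merged into one kernel-verified Lean document; each statement's English description precedes it below -/
import Mathlib

section
/- For the van der Corput sequence S in base 2, and for every N ≥ 1, the star discrepancy satisfies D*_N(S) ≤ S₂(N)/N, where S₂(N) is the binary sum-of-digits function of N. In particular, if N is a power of 2 then D*_N(S) ≤ 1/N. -/
/-! Write `E(N, t) = #{n < N | x n < t} - N t`. Since `x (2k) = x k / 2` and
`x (2k+1) = (x k + 1) / 2`, the first `2m` points are two half-size copies of the first `m`
points, one in `[0, 1/2)` and one in `[1/2, 1)`; hence `E(2m, t) = E(m, s)` with `s = 2t` or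
`s = 2t - 1`, while the extra point of `2m + 1` changes `E` by at most `1`. Induction on the
binary digits gives `|E(N, t)| ≤ S₂(N)` for `t ∈ [0, 1]`. -/

open scoped Classical

/-- The van der Corput sequence in base 2. -/
noncomputable def vdc (n : ℕ) : ℝ :=
  ∑ i ∈ Finset.range n.size, if n.testBit i then ((2 : ℝ) ^ (i + 1))⁻¹ else 0

/-- Star discrepancy of the first `N` terms of a sequence in `[0,1)`. -/
noncomputable def starD (x : ℕ → ℝ) (N : ℕ) : ℝ :=
  ⨆ t : Set.Icc (0 : ℝ) 1,
    |(((Finset.range N).filter fun n => x n < (t : ℝ)).card : ℝ) / N - (t : ℝ)|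

open Finset

theorem Nat.sum_digits_base_mul_add {b r : ℕ} (hb : 1 < b) (hr : r < b) (n : ℕ) :
    (Nat.digits b (b * n + r)).sum = (Nat.digits b n).sum + r := by
  rw [add_comm _ r, add_comm _ r]
  rcases eq_or_ne r 0 with rfl | hr0
  · rcases eq_or_ne n 0 with rfl | hn0
    · simp
    · rw [Nat.digits_add b hb 0 n hr (Or.inr hn0)]
      simp
  · rw [Nat.digits_add b hb r n hr (Or.inl hr0), List.sum_cons]

theorem Nat.sum_digits_two_pow (k : ℕ) : (Nat.digits 2 (2 ^ k)).sum = 1 := by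
  rw [← mul_one (2 ^ k), Nat.digits_base_pow_mul one_lt_two one_pos]
  simp

lemma vdc_eq_sum_range {n K : ℕ} (h : n.size ≤ K) :
    vdc n = ∑ i ∈ range K, if n.testBit i then ((2 : ℝ) ^ (i + 1))⁻¹ else 0 := by
  refine sum_subset (range_subset_range.2 h) fun i _ hi => ?_
  rw [Nat.testBit_eq_false_of_lt (Nat.size_le.1 (not_lt.1 (mem_range.not.1 hi)))]
  simp

lemma vdc_bit (b : Bool) (k : ℕ) : vdc (Nat.bit b k) = (vdc k + b.toNat) / 2 := by
  have hsize : (Nat.bit b k).size ≤ k.size + 1 := by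
    rcases eq_or_ne (Nat.bit b k) 0 with h | h
    · simp [h]
    · rw [Nat.size_bit h]
  rw [vdc_eq_sum_range hsize, sum_range_succ', Nat.testBit_bit_zero]
  simp only [Nat.testBit_bit_succ, vdc, add_div, sum_div]
  congr 1
  · refine sum_congr rfl fun i _ => ?_
    split_ifs <;> simp [pow_succ, div_eq_mul_inv, mul_comm]
  · cases b <;> simp

lemma vdc_two_mul (k : ℕ) : vdc (2 * k) = vdc k / 2 := by
  simpa using vdc_bit false k

lemma vdc_two_mul_add_one (k : ℕ) : vdc (2 * k + 1) = (vdc k + 1) / 2 := by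
  simpa using vdc_bit true k

lemma vdc_nonneg (n : ℕ) : 0 ≤ vdc n :=
  sum_nonneg fun i _ => by split_ifs <;> positivity

lemma vdc_lt_one (n : ℕ) : vdc n < 1 := by
  induction n using Nat.evenOddRec with
  | h0 => simp [vdc]
  | h_even n ih => rw [vdc_two_mul]; linarith
  | h_odd n ih => rw [vdc_two_mul_add_one]; linarith

noncomputable def vdcCount (N : ℕ) (t : ℝ) : ℕ := #{n ∈ range N | vdc n < t}

lemma vdcCount_succ (N : ℕ) (t : ℝ) :
    vdcCount (N + 1) t = vdcCount N t + if vdc N < t then 1 else 0 := by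
  simp only [vdcCount, range_add_one, filter_insert]
  split_ifs <;> simp [card_insert_of_notMem, mem_filter]

lemma vdcCount_two_mul (m : ℕ) (t : ℝ) :
    vdcCount (2 * m) t = vdcCount m (2 * t) + vdcCount m (2 * t - 1) := by
  induction m with
  | zero => simp [vdcCount]
  | succ m ih =>
    have heven : vdc (2 * m) < t ↔ vdc m < 2 * t := by
      rw [vdc_two_mul]; constructor <;> intro <;> linarith
    have hodd : vdc (2 * m + 1) < t ↔ vdc m < 2 * t - 1 := by
      rw [vdc_two_mul_add_one]; constructor <;> intro <;> linarith
    rw [show 2 * (m + 1) = 2 * m + 1 + 1 by ring, vdcCount_succ, vdcCount_succ, ih,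
      vdcCount_succ, vdcCount_succ]
    simp only [heven, hodd]
    ring

lemma vdcCount_of_nonpos (N : ℕ) {t : ℝ} (ht : t ≤ 0) : vdcCount N t = 0 := by
  simp only [vdcCount, card_eq_zero, filter_eq_empty_iff, not_lt]
  exact fun n _ => ht.trans (vdc_nonneg n)

lemma vdcCount_of_one_le (N : ℕ) {t : ℝ} (ht : 1 ≤ t) : vdcCount N t = N := by
  rw [vdcCount, filter_true_of_mem fun n _ => (vdc_lt_one n).trans_le ht, card_range]

noncomputable def vdcError (N : ℕ) (t : ℝ) : ℝ := vdcCount N t - N * t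

lemma exists_vdcError_two_mul_eq (m : ℕ) {t : ℝ} (ht : t ∈ Set.Icc 0 1) :
    ∃ s ∈ Set.Icc (0 : ℝ) 1, vdcError (2 * m) t = vdcError m s := by
  obtain ⟨ht0, ht1⟩ := ht
  rcases le_total t (1 / 2) with h | h
  · refine ⟨2 * t, ⟨by linarith, by linarith⟩, ?_⟩
    rw [vdcError, vdcError, vdcCount_two_mul, vdcCount_of_nonpos m (t := 2 * t - 1) (by linarith)]
    push_cast
    ring
  · refine ⟨2 * t - 1, ⟨by linarith, by linarith⟩, ?_⟩
    rw [vdcError, vdcError, vdcCount_two_mul, vdcCount_of_one_le m (t := 2 * t) (by linarith)]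
    push_cast
    ring

lemma vdcError_succ (N : ℕ) (t : ℝ) :
    vdcError (N + 1) t = vdcError N t + ((if vdc N < t then 1 else 0) - t) := by
  rw [vdcError, vdcError, vdcCount_succ]
  push_cast
  ring

lemma abs_vdcError_le (N : ℕ) {t : ℝ} (ht : t ∈ Set.Icc 0 1) :
    |vdcError N t| ≤ (Nat.digits 2 N).sum := by
  induction N using Nat.evenOddRec generalizing t with
  | h0 => simp [vdcError, vdcCount]
  | h_even n ih =>
    obtain ⟨s, hs, heq⟩ := exists_vdcError_two_mul_eq n ht
    have hsum : (Nat.digits 2 (2 * n)).sum = (Nat.digits 2 n).sum := by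
      simpa using Nat.sum_digits_base_mul_add one_lt_two two_pos n
    rw [heq, hsum]
    exact ih hs
  | h_odd n ih =>
    have hjump : |(if vdc (2 * n) < t then 1 else 0) - t| ≤ 1 := by
      rw [abs_le]; split_ifs <;> constructor <;> linarith [ht.1, ht.2]
    obtain ⟨s, hs, heq⟩ := exists_vdcError_two_mul_eq n ht
    rw [vdcError_succ, heq, Nat.sum_digits_base_mul_add one_lt_two one_lt_two, Nat.cast_add,
      Nat.cast_one]
    exact (abs_add_le _ _).trans (add_le_add (ih hs) hjump)

/-- For the van der Corput sequence in base 2, `D*_N ≤ S₂(N)/N`, where `S₂(N)` is the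
binary sum-of-digits of `N`; in particular `D*_N ≤ 1/N` when `N` is a power of two. -/
theorem vdc_starD_le_sumDigits (N : ℕ) (hN : 1 ≤ N) :
    starD vdc N ≤ ((Nat.digits 2 N).sum : ℝ) / N ∧
    (∀ k : ℕ, N = 2 ^ k → starD vdc N ≤ 1 / N) := by
  have hN' : (0 : ℝ) < N := by exact_mod_cast hN
  have hD : starD vdc N ≤ ((Nat.digits 2 N).sum : ℝ) / N := by
    have : Nonempty (Set.Icc (0 : ℝ) 1) := ⟨⟨0, Set.left_mem_Icc.2 zero_le_one⟩⟩
    refine ciSup_le fun t => ?_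
    have hscale : (vdcCount N t : ℝ) / N - t = vdcError N t / N := by
      rw [vdcError, sub_div, mul_div_cancel_left₀ _ hN'.ne']
    change |(vdcCount N t : ℝ) / N - t| ≤ _
    rw [hscale, abs_div, abs_of_pos hN']
    gcongr
    exact abs_vdcError_le N t.2
  refine ⟨hD, fun k hk => hD.trans_eq ?_⟩
  rw [hk, Nat.sum_digits_two_pow, Nat.cast_one]
end

section
/- (Koksma's inequality, one-dimensional Koksma–Hlawka) For every function f : [0,1] → ℝ of bounded variation V(f) and every finite sequence x₀, …, x_{N−1} in [0,1), one has |∫₀¹ f(x) dx − (1/N) Σ_{n=0}^{N−1} f(x_n)| ≤ V(f) · D*_N, where D*_N is the star discrepancy of the point set. -/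
/-!
Sorting the points does not change the star discrepancy `D`, and for sorted points
`y₀ ≤ ⋯ ≤ y_{N-1}` the definition of `D` forces `|y_k - t| ≤ D` on the cell `[k/N, (k+1)/N]`.
For monotone `φ` this squeezes the mean of the `φ (y_k)` between `∫₀¹ φ (t - D)` and
`∫₀¹ φ (t + D)`, both within `(φ 1 - φ 0) * D` of `∫₀¹ φ`. The Jordan decomposition
`f = p - q` with `(p 1 - p 0) + (q 1 - q 0) = V(f)` reduces the general case to the monotone one.
-/

open scoped Classical
open Set MeasureTheory intervalIntegral

lemma integral_sub_integral_sub_right_le {ψ : ℝ → ℝ}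
    (hψ : ∀ a b, IntervalIntegrable ψ volume a b) {m M D : ℝ} (hm : ∀ t, m ≤ ψ t)
    (hM : ∀ t, ψ t ≤ M) (hD : 0 ≤ D) (a b : ℝ) :
    (∫ t in a..b, ψ t) - ∫ t in (a - D)..(b - D), ψ t ≤ (M - m) * D := by
  have upper : ∫ t in (b - D)..b, ψ t ≤ ∫ t in (b - D)..b, M :=
    integral_mono_on (by linarith) (hψ _ _) intervalIntegrable_const fun t _ => hM t
  have lower : ∫ t in (a - D)..a, m ≤ ∫ t in (a - D)..a, ψ t :=
    integral_mono_on (by linarith) intervalIntegrable_const (hψ _ _) fun t _ => hm t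
  rw [integral_interval_sub_interval_comm' (hψ _ _) (hψ _ _) (hψ _ _)]
  simp only [intervalIntegral.integral_const, smul_eq_mul] at upper lower
  linarith

lemma integral_zero_one_le_mean_of_le {g : ℝ → ℝ} (hg : IntervalIntegrable g volume 0 1)
    {N : ℕ} (hN : 0 < N) (c : Fin N → ℝ)
    (hc : ∀ k : Fin N, ∀ t ∈ Icc ((k : ℝ) / N) ((k + 1) / N), g t ≤ c k) :
    ∫ t in (0 : ℝ)..1, g t ≤ (1 / N) * ∑ k, c k := by
  have hN' : (0 : ℝ) < N := by exact_mod_cast hN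
  set a : ℕ → ℝ := fun k => k / N
  have ha_mono : ∀ k, a k ≤ a (k + 1) := fun k => by simp only [a]; gcongr; simp
  have hcell : ∀ k < N, IntervalIntegrable g volume (a k) (a (k + 1)) := by
    intro k hk
    refine hg.mono_set ?_
    rw [uIcc_of_le (ha_mono k), uIcc_of_le zero_le_one]
    refine Icc_subset_Icc (by simp only [a]; positivity) (div_le_one_of_le₀ ?_ hN'.le)
    exact_mod_cast hk
  calc ∫ t in (0 : ℝ)..1, g t = ∑ k ∈ Finset.range N, ∫ t in a k..a (k + 1), g t := by
        rw [sum_integral_adjacent_intervals hcell]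
        simp [a, hN'.ne']
    _ = ∑ k : Fin N, ∫ t in a k..a (k + 1), g t := (Fin.sum_univ_eq_sum_range _ N).symm
    _ ≤ ∑ k : Fin N, (1 / N) * c k := by
        refine Finset.sum_le_sum fun k _ => ?_
        calc ∫ t in a k..a (k + 1), g t ≤ ∫ t in a k..a (k + 1), c k :=
              integral_mono_on (ha_mono k) (hcell k k.isLt) intervalIntegrable_const
                (by simpa [a] using hc k)
          _ = (1 / N) * c k := by
              rw [intervalIntegral.integral_const, smul_eq_mul]
              simp only [a]
              push_cast
              field_simp
              ring
    _ = (1 / N) * ∑ k, c k := (Finset.mul_sum _ _ _).symm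

lemma mean_le_integral_zero_one_of_le {g : ℝ → ℝ} (hg : IntervalIntegrable g volume 0 1)
    {N : ℕ} (hN : 0 < N) (c : Fin N → ℝ)
    (hc : ∀ k : Fin N, ∀ t ∈ Icc ((k : ℝ) / N) ((k + 1) / N), c k ≤ g t) :
    (1 / N) * ∑ k, c k ≤ ∫ t in (0 : ℝ)..1, g t := by
  have := integral_zero_one_le_mean_of_le hg.neg hN (-c) fun k t ht => neg_le_neg (hc k t ht)
  simpa [intervalIntegral.integral_neg, Finset.sum_neg_distrib] using this

lemma Monotone.abs_integral_sub_mean_le {ψ : ℝ → ℝ} (hψ : Monotone ψ) {m M : ℝ}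
    (hm : ∀ t, m ≤ ψ t) (hM : ∀ t, ψ t ≤ M) {N : ℕ} (hN : 0 < N) {D : ℝ} (hD : 0 ≤ D)
    (y : Fin N → ℝ) (hy_le : ∀ k : Fin N, y k ≤ k / N + D)
    (hle_y : ∀ k : Fin N, (k + 1) / N - D ≤ y k) :
    |(∫ t in (0 : ℝ)..1, ψ t) - (1 / N) * ∑ k, ψ (y k)| ≤ (M - m) * D := by
  have shift := integral_sub_integral_sub_right_le (fun _ _ => hψ.intervalIntegrable) hm hM hD
  have hψ_sub : Monotone fun t => ψ (t - D) := fun _ _ h => hψ (by linarith)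
  have hψ_add : Monotone fun t => ψ (t + D) := fun _ _ h => hψ (by linarith)
  have below : ∫ t in (0 : ℝ)..1, ψ (t - D) ≤ (1 / N) * ∑ k, ψ (y k) :=
    integral_zero_one_le_mean_of_le hψ_sub.intervalIntegrable hN _ fun k t ht =>
      hψ (by linarith [ht.2, hle_y k])
  have above : (1 / N) * ∑ k, ψ (y k) ≤ ∫ t in (0 : ℝ)..1, ψ (t + D) :=
    mean_le_integral_zero_one_of_le hψ_add.intervalIntegrable hN (fun k => ψ (y k)) fun k t ht =>
      hψ (by linarith [ht.1, hy_le k])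
  rw [integral_comp_sub_right] at below
  rw [integral_comp_add_right, zero_add] at above
  have shift_back := shift D (1 + D)
  rw [sub_self, add_sub_cancel_right] at shift_back
  rw [abs_le]
  constructor <;> linarith [shift 0 1]

noncomputable def starDiscrepancy {N : ℕ} (x : Fin N → ℝ) : ℝ :=
  ⨆ t : Icc (0 : ℝ) 1, |((Finset.univ.filter fun n => x n < (t : ℝ)).card : ℝ) / N - (t : ℝ)|

section starDiscrepancy

variable {N : ℕ}

lemma abs_sub_le_starDiscrepancy (x : Fin N → ℝ) {t : ℝ} (ht : t ∈ Icc (0 : ℝ) 1) :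
    |((Finset.univ.filter fun n => x n < t).card : ℝ) / N - t| ≤ starDiscrepancy x := by
  refine le_ciSup (f := fun t : Icc (0 : ℝ) 1 =>
    |((Finset.univ.filter fun n => x n < (t : ℝ)).card : ℝ) / N - (t : ℝ)|) ⟨1, ?_⟩ ⟨t, ht⟩
  rintro _ ⟨⟨s, hs⟩, rfl⟩
  have hcard : ((Finset.univ.filter fun n => x n < s).card : ℝ) / N ≤ 1 := by
    refine div_le_one_of_le₀ ?_ (Nat.cast_nonneg N)
    exact_mod_cast (Finset.card_filter_le _ _).trans_eq (Finset.card_fin N)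
  have hcard0 : 0 ≤ ((Finset.univ.filter fun n => x n < s).card : ℝ) / N := by positivity
  rw [abs_sub_le_iff]
  constructor <;> linarith [hs.1, hs.2]

lemma starDiscrepancy_nonneg (x : Fin N → ℝ) : 0 ≤ starDiscrepancy x :=
  (abs_nonneg _).trans (abs_sub_le_starDiscrepancy x (left_mem_Icc.2 zero_le_one))

lemma starDiscrepancy_comp_perm (x : Fin N → ℝ) (σ : Equiv.Perm (Fin N)) :
    starDiscrepancy (x ∘ σ) = starDiscrepancy x := by
  unfold starDiscrepancy
  congr! 6 with t
  exact Finset.card_equiv σ (by simp)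

lemma Monotone.le_div_add_starDiscrepancy {y : Fin N → ℝ} (hy : Monotone y)
    (hy01 : ∀ k, y k ∈ Icc (0 : ℝ) 1) (k : Fin N) : y k ≤ k / N + starDiscrepancy y := by
  have hcount : ((Finset.univ.filter fun m => y m < y k).card : ℝ) ≤ k := by
    have hsub : (Finset.univ.filter fun m => y m < y k) ⊆ Finset.Iio k := fun m hm =>
      Finset.mem_Iio.2 (hy.reflect_lt (Finset.mem_filter.1 hm).2)
    exact_mod_cast (Finset.card_le_card hsub).trans_eq (Fin.card_Iio k)
  have hdiv := div_le_div_of_nonneg_right hcount (Nat.cast_nonneg (α := ℝ) N)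
  have hdisc := abs_sub_le_starDiscrepancy y (hy01 k)
  linarith [neg_abs_le (((Finset.univ.filter fun m => y m < y k).card : ℝ) / N - y k)]

lemma Monotone.add_one_div_sub_starDiscrepancy_le {y : Fin N → ℝ} (hy : Monotone y)
    (hy01 : ∀ k, y k ∈ Icc (0 : ℝ) 1) (k : Fin N) : (k + 1) / N - starDiscrepancy y ≤ y k := by
  refine le_of_forall_gt_imp_ge_of_dense fun t hkt => ?_
  rcases le_or_gt 1 t with h1 | h1
  · have : ((k : ℝ) + 1) / N ≤ 1 := div_le_one_of_le₀ (by exact_mod_cast k.isLt) (Nat.cast_nonneg _)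
    linarith [starDiscrepancy_nonneg y]
  have hcount : (k : ℝ) + 1 ≤ (Finset.univ.filter fun m => y m < t).card := by
    have hsub : Finset.Iic k ⊆ Finset.univ.filter fun m => y m < t := fun m hm =>
      Finset.mem_filter.2 ⟨Finset.mem_univ m, (hy (Finset.mem_Iic.1 hm)).trans_lt hkt⟩
    exact_mod_cast (Fin.card_Iic k).symm.trans_le (Finset.card_le_card hsub)
  have hdiv := div_le_div_of_nonneg_right hcount (Nat.cast_nonneg (α := ℝ) N)
  have hdisc := abs_sub_le_starDiscrepancy y ⟨(hy01 k).1.trans hkt.le, h1.le⟩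
  linarith [le_abs_self (((Finset.univ.filter fun m => y m < t).card : ℝ) / N - t)]

end starDiscrepancy

theorem MonotoneOn.abs_integral_sub_mean_le_starDiscrepancy {φ : ℝ → ℝ}
    (hφ : MonotoneOn φ (Icc 0 1)) {N : ℕ} (hN : 0 < N) (x : Fin N → ℝ)
    (hx : ∀ n, x n ∈ Icc (0 : ℝ) 1) :
    |(∫ t in (0 : ℝ)..1, φ t) - (1 / N) * ∑ n, φ (x n)| ≤ (φ 1 - φ 0) * starDiscrepancy x := by
  -- the constant extension keeps the shifted integrals within the bounds `φ 0 ≤ ψ ≤ φ 1`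
  set ψ := IccExtend zero_le_one (φ ∘ Subtype.val)
  have hψφ : ∀ t ∈ Icc (0 : ℝ) 1, ψ t = φ t := fun t ht => IccExtend_of_mem _ _ ht
  have hm : ∀ t, φ 0 ≤ ψ t := fun t =>
    hφ (left_mem_Icc.2 zero_le_one) (projIcc 0 1 _ t).2 (projIcc 0 1 _ t).2.1
  have hM : ∀ t, ψ t ≤ φ 1 := fun t =>
    hφ (projIcc 0 1 _ t).2 (right_mem_Icc.2 zero_le_one) (projIcc 0 1 _ t).2.2
  set y := x ∘ Tuple.sort x
  have hy : Monotone y := Tuple.monotone_sort x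
  have hsum : ∑ n, φ (x n) = ∑ k, ψ (y k) := by
    rw [← Equiv.sum_comp (Tuple.sort x)]
    exact Finset.sum_congr rfl fun k _ => (hψφ _ (hx _)).symm
  have hint : ∫ t in (0 : ℝ)..1, φ t = ∫ t in (0 : ℝ)..1, ψ t :=
    integral_congr fun t ht => (hψφ t (by rwa [uIcc_of_le zero_le_one] at ht)).symm
  rw [hint, hsum, ← starDiscrepancy_comp_perm x (Tuple.sort x)]
  exact (hφ.monotone.IccExtend zero_le_one).abs_integral_sub_mean_le hm hM hN
    (starDiscrepancy_nonneg y) y (hy.le_div_add_starDiscrepancy fun _ => hx _)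
    (hy.add_one_div_sub_starDiscrepancy_le fun _ => hx _)

/-- Koksma's inequality (one-dimensional Koksma–Hlawka): for `f : [0,1] → ℝ` of bounded
variation `V(f)` and points `x₀,…,x_{N-1}` in `[0,1)`, the QMC integration error is at
most `V(f) · D*_N`. -/
theorem koksma_inequality (f : ℝ → ℝ) (hf : BoundedVariationOn f (Set.Icc 0 1))
    (N : ℕ) (hN : 0 < N) (x : Fin N → ℝ) (hx : ∀ n, x n ∈ Set.Ico (0 : ℝ) 1) :
    |(∫ t in (0 : ℝ)..1, f t) - (1 / N) * ∑ n, f (x n)| ≤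
      (eVariationOn f (Set.Icc 0 1)).toReal *
        ⨆ t : Set.Icc (0 : ℝ) 1,
          |((Finset.univ.filter fun n => x n < (t : ℝ)).card : ℝ) / N - (t : ℝ)| := by
  obtain ⟨p, q, hp, hq, rfl, hpq⟩ := hf.locallyBoundedVariationOn.exists_monotoneOn_sub_monotoneOn'
  have h0 : (0 : ℝ) ∈ Icc (0 : ℝ) 1 := left_mem_Icc.2 zero_le_one
  have h1 : (1 : ℝ) ∈ Icc (0 : ℝ) 1 := right_mem_Icc.2 zero_le_one
  have hx' : ∀ n, x n ∈ Icc (0 : ℝ) 1 := fun n => Ico_subset_Icc_self (hx n)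
  have hV : (eVariationOn (p - q) (Icc 0 1)).toReal = (p 1 - p 0) + (q 1 - q 0) := by
    rw [hpq 0 h0 1 h1, variationOnFromTo.eq_of_le _ _ zero_le_one, inter_self]
  have hsplit : (∫ t in (0 : ℝ)..1, (p - q) t) - (1 / N) * ∑ n, (p - q) (x n) =
      ((∫ t in (0 : ℝ)..1, p t) - (1 / N) * ∑ n, p (x n)) -
        ((∫ t in (0 : ℝ)..1, q t) - (1 / N) * ∑ n, q (x n)) := by
    have hint (g : ℝ → ℝ) (hg : MonotoneOn g (Icc 0 1)) : IntervalIntegrable g volume 0 1 :=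
      MonotoneOn.intervalIntegrable (by rwa [uIcc_of_le zero_le_one])
    simp only [Pi.sub_apply, integral_sub (hint p hp) (hint q hq), Finset.sum_sub_distrib]
    ring
  change _ ≤ _ * starDiscrepancy x
  rw [hsplit, hV, add_mul]
  exact (abs_sub _ _).trans <| add_le_add
    (hp.abs_integral_sub_mean_le_starDiscrepancy hN x hx')
    (hq.abs_integral_sub_mean_le_starDiscrepancy hN x hx')
end

section
/- (Roth's lower bound for L₂ discrepancy) For every dimension s ≥ 2 there exists a constant c_s > 0 such that for every N ≥ 2 and every N-point set P in [0,1)^s, the L₂ discrepancy satisfies L_{2,N}(P) ≥ c_s (log N)^{(s−1)/2} / N. -/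
/-!
Roth's orthogonal-function method. Choose `n` with `2N ≤ 2^n ≤ 4N`. For each `r ∈ ℕ^s` with
`r₁ + ⋯ + r_s = n` the unit cube is tiled by `2^n` dyadic boxes `∏ⱼ [aⱼ 2^{-rⱼ}, (aⱼ+1) 2^{-rⱼ})`,
so at least `2^n - N ≥ 2^{n-1}` of them contain no point. The product Haar function of an empty
box is orthogonal to the counting part of `Δ`, hence `⟨Δ, h⟩ = -⟨t₁⋯t_s, h⟩ = ±4^{-(n+s)}`, while
the Haar functions of distinct boxes are orthogonal with `‖h‖² = 2^{-n}`. Bessel's inequality gives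
`‖Δ‖² ≥ #(empty boxes) 2^n / 16^{n+s} ≳ #{r : |r| = n} / N²`, and there are at least
`(n/(s-1))^{s-1} ≥ (log N/(s-1))^{s-1}` such `r`.
-/

open scoped Classical

open MeasureTheory Finset

noncomputable section

section Bessel

variable {α : Type*} [MeasurableSpace α] {μ : Measure α}

theorem sq_integral_mul_le {f g : α → ℝ} (hf : MemLp f 2 μ) (hg : MemLp g 2 μ) :
    (∫ x, f x * g x ∂μ) ^ 2 ≤ (∫ x, f x * f x ∂μ) * ∫ x, g x * g x ∂μ := by
  have hff : Integrable (fun x ↦ f x * f x) μ := hf.integrable_mul hf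
  have hfg : Integrable (fun x ↦ f x * g x) μ := hf.integrable_mul hg
  have hgg : Integrable (fun x ↦ g x * g x) μ := hg.integrable_mul hg
  have hquad (c : ℝ) : 0 ≤ (∫ x, g x * g x ∂μ) * (c * c) + 2 * (∫ x, f x * g x ∂μ) * c
      + ∫ x, f x * f x ∂μ := by
    have hexp : (fun x ↦ (c * g x + f x) ^ 2)
        = fun x ↦ (c * c) * (g x * g x) + (2 * c) * (f x * g x) + f x * f x := by
      ext x; ring
    have : 0 ≤ ∫ x, (c * g x + f x) ^ 2 ∂μ := integral_nonneg fun x ↦ sq_nonneg _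
    rw [hexp, integral_add (by exact (hgg.const_mul _).add (hfg.const_mul _)) hff,
      integral_add (hgg.const_mul _) (hfg.const_mul _), integral_const_mul,
      integral_const_mul] at this
    linarith
  have := discrim_le_zero hquad
  rw [discrim] at this
  nlinarith

/-- A special case of Bessel's inequality. -/
theorem card_mul_sq_le_mul_integral_mul_self {ι : Type*} (S : Finset ι) {D : α → ℝ}
    {h : ι → α → ℝ} {σ ε : ℝ} (hD : MemLp D 2 μ) (hh : ∀ i ∈ S, MemLp (h i) 2 μ) (hσ : 0 ≤ σ)
    (horth : ∀ i ∈ S, ∀ j ∈ S, i ≠ j → ∫ x, h i x * h j x ∂μ = 0)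
    (hnorm : ∀ i ∈ S, ∫ x, h i x * h i x ∂μ = σ) (hcorr : ∀ i ∈ S, ∫ x, D x * h i x ∂μ = ε) :
    #S * ε ^ 2 ≤ σ * ∫ x, D x * D x ∂μ := by
  have hmul {u v : α → ℝ} (hu : MemLp u 2 μ) (hv : MemLp v 2 μ) :
      Integrable (fun x ↦ u x * v x) μ := hu.integrable_mul hv
  set F : α → ℝ := fun x ↦ ∑ i ∈ S, h i x
  have hDF : ∫ x, D x * F x ∂μ = #S * ε := by
    simp only [F, mul_sum]
    rw [integral_finsetSum _ fun i hi ↦ hmul hD (hh i hi), sum_congr rfl hcorr]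
    simp
  have hFF : ∫ x, F x * F x ∂μ = #S * σ := by
    simp only [F, sum_mul_sum]
    rw [integral_finsetSum _ fun i hi ↦ integrable_finsetSum _ fun j hj ↦
      hmul (hh i hi) (hh j hj), sum_congr rfl fun i hi ↦ ?_, sum_const, nsmul_eq_mul]
    rw [integral_finsetSum _ fun j hj ↦ hmul (hh i hi) (hh j hj),
      sum_eq_single_of_mem i hi fun j hj hji ↦ horth i hi j hj hji.symm, hnorm i hi]
  have hCS := sq_integral_mul_le hD (memLp_finsetSum S hh)
  rw [hDF, hFF] at hCS
  have hI : 0 ≤ ∫ x, D x * D x ∂μ := integral_nonneg fun x ↦ mul_self_nonneg _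
  rcases S.eq_empty_or_nonempty with rfl | hS
  · simpa using mul_nonneg hσ hI
  · have hcard : (0 : ℝ) < #S := by exact_mod_cast hS.card_pos
    nlinarith

end Bessel

section Haar

def dyadicInterval (k a : ℕ) : Set ℝ := Set.Ico (a / 2 ^ k) ((a + 1) / 2 ^ k)

def haar (k a : ℕ) (u : ℝ) : ℝ :=
  (dyadicInterval (k + 1) (2 * a)).indicator 1 u
    - (dyadicInterval (k + 1) (2 * a + 1)).indicator 1 u

variable {k k' a a' : ℕ} {u v : ℝ}

theorem mem_dyadicInterval_iff_floor : u ∈ dyadicInterval k a ↔ ⌊u * 2 ^ k⌋ = a := by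
  rw [dyadicInterval, Set.mem_Ico, Int.floor_eq_iff, div_le_iff₀ (by positivity),
    lt_div_iff₀ (by positivity)]
  push_cast
  rfl

theorem measurableSet_dyadicInterval : MeasurableSet (dyadicInterval k a) := measurableSet_Ico

theorem measureReal_dyadicInterval : volume.real (dyadicInterval k a) = 1 / 2 ^ k := by
  rw [dyadicInterval, Real.volume_real_Ico_of_le (by gcongr; linarith)]
  ring

theorem dyadicInterval_subset_Ico (h : a < 2 ^ k) : dyadicInterval k a ⊆ Set.Ico 0 1 := by
  refine Set.Ico_subset_Ico (by positivity) ?_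
  rw [div_le_one (by positivity)]
  exact_mod_cast h

theorem floor_mul_two_pow_eq_div (h : k ≤ k') (u : ℝ) :
    ⌊u * 2 ^ k⌋ = ⌊u * 2 ^ k'⌋ / 2 ^ (k' - k) := by
  have : u * 2 ^ k = u * 2 ^ k' / ((2 ^ (k' - k) : ℕ) : ℝ) := by
    rw [eq_div_iff (by positivity), mul_assoc]
    push_cast
    rw [← pow_add, Nat.add_sub_cancel' h]
  rw [this, Int.floor_div_natCast]
  push_cast
  rfl

theorem mem_dyadicInterval_iff_of_mem (h : k ≤ k') (b : ℕ) (hu : u ∈ dyadicInterval k' a')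
    (hv : v ∈ dyadicInterval k' a') : u ∈ dyadicInterval k b ↔ v ∈ dyadicInterval k b := by
  rw [mem_dyadicInterval_iff_floor] at hu hv ⊢
  rw [mem_dyadicInterval_iff_floor, floor_mul_two_pow_eq_div h u, floor_mul_two_pow_eq_div h v,
    hu, hv]

theorem eq_of_mem_dyadicInterval (ha : u ∈ dyadicInterval k a) (ha' : u ∈ dyadicInterval k a') :
    a = a' := by
  rw [mem_dyadicInterval_iff_floor] at ha ha'
  exact_mod_cast ha.symm.trans ha'

theorem dyadicInterval_succ_subset {b : ℕ} (hb : b / 2 = a) :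
    dyadicInterval (k + 1) b ⊆ dyadicInterval k a := fun u hu ↦ by
  rw [mem_dyadicInterval_iff_floor] at hu ⊢
  rw [floor_mul_two_pow_eq_div (k.le_add_right 1), hu, Nat.add_sub_cancel_left]
  omega

theorem dyadicInterval_left_subset : dyadicInterval (k + 1) (2 * a) ⊆ dyadicInterval k a :=
  dyadicInterval_succ_subset (by omega)

theorem dyadicInterval_right_subset : dyadicInterval (k + 1) (2 * a + 1) ⊆ dyadicInterval k a :=
  dyadicInterval_succ_subset (by omega)

theorem haar_eq_zero_of_notMem (hu : u ∉ dyadicInterval k a) : haar k a u = 0 := by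
  rw [haar, Set.indicator_of_notMem (fun h ↦ hu (dyadicInterval_left_subset h)),
    Set.indicator_of_notMem (fun h ↦ hu (dyadicInterval_right_subset h)), sub_self]

theorem abs_haar_le_one (k a : ℕ) (u : ℝ) : |haar k a u| ≤ 1 := by
  unfold haar
  by_cases hl : u ∈ dyadicInterval (k + 1) (2 * a) <;>
    by_cases hr : u ∈ dyadicInterval (k + 1) (2 * a + 1) <;> simp [hl, hr]

theorem measurable_haar (k a : ℕ) : Measurable (haar k a) :=
  (measurable_const.indicator measurableSet_dyadicInterval).sub
    (measurable_const.indicator measurableSet_dyadicInterval)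

theorem integrable_haar (k a : ℕ) : Integrable (haar k a) :=
  ((integrableOn_const measure_Ico_lt_top.ne).integrable_indicator
    measurableSet_dyadicInterval).sub
    ((integrableOn_const measure_Ico_lt_top.ne).integrable_indicator measurableSet_dyadicInterval)

theorem mul_haar_eq (f : ℝ → ℝ) (u : ℝ) : f u * haar k a u =
    (dyadicInterval (k + 1) (2 * a)).indicator f u
      - (dyadicInterval (k + 1) (2 * a + 1)).indicator f u := by
  simp only [haar, Set.indicator, mul_sub]
  split_ifs <;> simp

theorem integrable_mul_haar {f : ℝ → ℝ} (hf : IntegrableOn f (dyadicInterval k a)) :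
    Integrable (fun u ↦ f u * haar k a u) := by
  simp only [mul_haar_eq]
  exact ((hf.mono_set dyadicInterval_left_subset).integrable_indicator
    measurableSet_dyadicInterval).sub
    ((hf.mono_set dyadicInterval_right_subset).integrable_indicator measurableSet_dyadicInterval)

theorem integral_mul_haar {f : ℝ → ℝ} (hf : IntegrableOn f (dyadicInterval k a)) :
    ∫ u, f u * haar k a u = (∫ u in dyadicInterval (k + 1) (2 * a), f u)
      - ∫ u in dyadicInterval (k + 1) (2 * a + 1), f u := by
  simp only [mul_haar_eq]
  rw [integral_sub ((hf.mono_set dyadicInterval_left_subset).integrable_indicator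
      measurableSet_dyadicInterval)
    ((hf.mono_set dyadicInterval_right_subset).integrable_indicator measurableSet_dyadicInterval),
    integral_indicator measurableSet_dyadicInterval,
    integral_indicator measurableSet_dyadicInterval]

theorem integral_mul_haar_of_eqOn {f : ℝ → ℝ} {c : ℝ} (hf : ∀ u ∈ dyadicInterval k a, f u = c) :
    ∫ u, f u * haar k a u = 0 := by
  have hcongr (b : ℕ) (hb : dyadicInterval (k + 1) b ⊆ dyadicInterval k a) :
      ∫ u in dyadicInterval (k + 1) b, f u = c / 2 ^ (k + 1) := by
    rw [setIntegral_congr_fun measurableSet_dyadicInterval fun u hu ↦ hf u (hb hu),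
      setIntegral_const, measureReal_dyadicInterval, smul_eq_mul]
    ring
  have hint : IntegrableOn f (dyadicInterval k a) :=
    (integrableOn_const measure_Ico_lt_top.ne).congr_fun (fun u hu ↦ (hf u hu).symm)
      measurableSet_dyadicInterval
  rw [integral_mul_haar hint, hcongr _ dyadicInterval_left_subset,
    hcongr _ dyadicInterval_right_subset, sub_self]

theorem haar_eq_of_mem (hk : k < k') (hu : u ∈ dyadicInterval k' a')
    (hv : v ∈ dyadicInterval k' a') : haar k a u = haar k a v := by
  simp only [haar, Set.indicator_apply, mem_dyadicInterval_iff_of_mem hk _ hu hv, Pi.one_apply]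

theorem left_mem_dyadicInterval (k a : ℕ) : (a / 2 ^ k : ℝ) ∈ dyadicInterval k a :=
  Set.left_mem_Ico.2 (by gcongr; linarith)

theorem integral_haar_mul_haar_of_lt (hk : k < k') : ∫ u, haar k a u * haar k' a' u = 0 :=
  integral_mul_haar_of_eqOn fun _ hu ↦ haar_eq_of_mem hk hu (left_mem_dyadicInterval k' a')

theorem integral_haar_mul_haar_of_ne (h : (k, a) ≠ (k', a')) :
    ∫ u, haar k a u * haar k' a' u = 0 := by
  rcases lt_trichotomy k k' with hk | rfl | hk
  · exact integral_haar_mul_haar_of_lt hk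
  · refine integral_mul_haar_of_eqOn fun u hu ↦ haar_eq_zero_of_notMem fun hu' ↦ h ?_
    rw [eq_of_mem_dyadicInterval hu' hu]
  · simp_rw [mul_comm (haar k a _)]
    exact integral_haar_mul_haar_of_lt hk

theorem integral_haar_mul_self (k a : ℕ) : ∫ u, haar k a u * haar k a u = 1 / 2 ^ k := by
  have hl (u) (hu : u ∈ dyadicInterval (k + 1) (2 * a)) : haar k a u = 1 := by
    have : u ∉ dyadicInterval (k + 1) (2 * a + 1) := fun h ↦ by
      have := eq_of_mem_dyadicInterval hu h; omega
    simp [haar, hu, this]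
  have hr (u) (hu : u ∈ dyadicInterval (k + 1) (2 * a + 1)) : haar k a u = -1 := by
    have : u ∉ dyadicInterval (k + 1) (2 * a) := fun h ↦ by
      have := eq_of_mem_dyadicInterval hu h; omega
    simp [haar, hu, this]
  rw [integral_mul_haar (integrable_haar k a).integrableOn,
    setIntegral_congr_fun measurableSet_dyadicInterval hl,
    setIntegral_congr_fun measurableSet_dyadicInterval hr, setIntegral_const, setIntegral_const,
    measureReal_dyadicInterval, measureReal_dyadicInterval, pow_succ]
  ring

theorem setIntegral_dyadicInterval_id (k a : ℕ) :
    ∫ u in dyadicInterval k a, u = (2 * a + 1) / (2 * (2 ^ k) ^ 2) := by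
  rw [dyadicInterval, integral_Ico_eq_integral_Ioc, ← intervalIntegral.integral_of_le
    (by gcongr; linarith), integral_id]
  field_simp
  ring

theorem integral_id_mul_haar (k a : ℕ) : ∫ u, u * haar k a u = -1 / 4 ^ (k + 1) := by
  rw [integral_mul_haar (continuous_id.integrableOn_Icc.mono_set Set.Ico_subset_Icc_self :
      IntegrableOn (fun u : ℝ ↦ u) (dyadicInterval k a)),
    setIntegral_dyadicInterval_id, setIntegral_dyadicInterval_id,
    show (4 : ℝ) ^ (k + 1) = (2 ^ (k + 1)) ^ 2 by rw [← pow_mul, mul_comm, pow_mul]; norm_num]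
  field_simp
  push_cast
  ring

theorem integral_ite_lt_mul_haar {c : ℝ} (hc : c ∉ dyadicInterval k a) :
    ∫ u, (if c < u then 1 else 0) * haar k a u = 0 := by
  by_cases hlt : c < a / 2 ^ k
  · exact integral_mul_haar_of_eqOn (c := 1) fun u hu ↦ if_pos (hlt.trans_le hu.1)
  · have hle : (a + 1) / 2 ^ k ≤ c := by
      by_contra h
      exact hc ⟨not_lt.1 hlt, not_le.1 h⟩
    exact integral_mul_haar_of_eqOn (c := 0) fun u hu ↦ if_neg (hu.2.trans_le hle).not_gt

end Haar

section ProductHaar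

variable {ι : Type*} [Fintype ι]

def unitCube (ι : Type*) : Set (ι → ℝ) := Set.univ.pi fun _ ↦ Set.Icc 0 1

theorem measurableSet_unitCube : MeasurableSet (unitCube ι) :=
  .univ_pi fun _ ↦ measurableSet_Icc

instance : IsFiniteMeasure (volume.restrict (unitCube ι)) :=
  isFiniteMeasure_restrict.2 (isCompact_univ_pi fun _ ↦ isCompact_Icc).measure_lt_top.ne

def prodHaar (r a : ι → ℕ) (t : ι → ℝ) : ℝ := ∏ j, haar (r j) (a j) (t j)

/-- Indices `a` of the dyadic boxes `∏ j, dyadicInterval (r j) (a j)` contained in the unit cube. -/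
def dyadicBoxes (r : ι → ℕ) : Finset (ι → ℕ) := Fintype.piFinset fun j ↦ range (2 ^ r j)

variable {r a r' a' : ι → ℕ}

theorem card_dyadicBoxes (r : ι → ℕ) : #(dyadicBoxes r) = 2 ^ ∑ j, r j := by
  simp [dyadicBoxes, prod_pow_eq_pow_sum]

theorem measurable_prodHaar (r a : ι → ℕ) : Measurable (prodHaar r a) :=
  Finset.measurable_prod _ fun j _ ↦ (measurable_haar _ _).comp (measurable_pi_apply j)

theorem abs_prodHaar_le_one (r a : ι → ℕ) (t : ι → ℝ) : |prodHaar r a t| ≤ 1 := by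
  rw [prodHaar, abs_prod]
  exact prod_le_one (fun _ _ ↦ abs_nonneg _) fun _ _ ↦ abs_haar_le_one _ _ _

theorem memLp_prodHaar (μ : Measure (ι → ℝ)) [IsFiniteMeasure μ] (r a : ι → ℕ) :
    MemLp (prodHaar r a) 2 μ :=
  .of_bound (measurable_prodHaar r a).aestronglyMeasurable 1
    (ae_of_all _ fun t ↦ abs_prodHaar_le_one r a t)

theorem prodHaar_eq_zero_of_notMem (ha : a ∈ dyadicBoxes r) {t : ι → ℝ} (ht : t ∉ unitCube ι) :
    prodHaar r a t = 0 := by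
  obtain ⟨j, hj⟩ : ∃ j, t j ∉ Set.Icc 0 1 := by
    simpa only [unitCube, Set.mem_pi, Set.mem_univ, true_imp_iff, not_forall] using ht
  refine prod_eq_zero (mem_univ j) (haar_eq_zero_of_notMem fun h ↦ hj ?_)
  have := dyadicInterval_subset_Ico (mem_range.1 (Fintype.mem_piFinset.1 ha j)) h
  exact ⟨this.1, this.2.le⟩

theorem setIntegral_unitCube_mul_prodHaar (ha : a ∈ dyadicBoxes r) (f : (ι → ℝ) → ℝ) :
    ∫ t in unitCube ι, f t * prodHaar r a t = ∫ t, f t * prodHaar r a t :=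
  setIntegral_eq_integral_of_forall_compl_eq_zero fun _ ht ↦ by
    rw [prodHaar_eq_zero_of_notMem ha ht, mul_zero]

theorem integral_prod_mul_prodHaar (f : ι → ℝ → ℝ) :
    ∫ t, (∏ j, f j (t j)) * prodHaar r a t = ∏ j, ∫ u, f j u * haar (r j) (a j) u := by
  simp_rw [prodHaar, ← prod_mul_distrib]
  exact integral_fintype_prod_volume_eq_prod fun j u ↦ f j u * haar (r j) (a j) u

theorem integrable_prod_mul_prodHaar {f : ι → ℝ → ℝ}
    (hf : ∀ j, IntegrableOn (f j) (dyadicInterval (r j) (a j))) :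
    Integrable fun t ↦ (∏ j, f j (t j)) * prodHaar r a t := by
  simp_rw [prodHaar, ← prod_mul_distrib]
  exact Integrable.fintype_prod fun j ↦ integrable_mul_haar (hf j)

theorem integral_prodHaar_mul_prodHaar_of_ne (h : (r, a) ≠ (r', a')) :
    ∫ t, prodHaar r a t * prodHaar r' a' t = 0 := by
  obtain ⟨j, hj⟩ : ∃ j, (r j, a j) ≠ (r' j, a' j) := by
    by_contra! hall
    exact h (Prod.ext (funext fun j ↦ congrArg Prod.fst (hall j))
      (funext fun j ↦ congrArg Prod.snd (hall j)))
  exact (integral_prod_mul_prodHaar _).trans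
    (prod_eq_zero (mem_univ j) (integral_haar_mul_haar_of_ne hj))

theorem integral_prodHaar_mul_self (r a : ι → ℕ) :
    ∫ t, prodHaar r a t * prodHaar r a t = 1 / 2 ^ ∑ j, r j := by
  refine (integral_prod_mul_prodHaar _).trans ?_
  simp_rw [integral_haar_mul_self]
  rw [prod_div_distrib, prod_const_one, prod_pow_eq_pow_sum]

theorem integral_prod_apply_mul_prodHaar (r a : ι → ℕ) :
    ∫ t, (∏ j, t j) * prodHaar r a t
      = (-1) ^ Fintype.card ι / 4 ^ (∑ j, r j + Fintype.card ι) := by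
  refine (integral_prod_mul_prodHaar fun _ u ↦ u).trans ?_
  simp_rw [integral_id_mul_haar]
  rw [prod_div_distrib, prod_pow_eq_pow_sum, sum_add_distrib]
  simp

theorem integral_prod_ite_lt_mul_prodHaar {c : ι → ℝ}
    (hc : ∃ j, c j ∉ dyadicInterval (r j) (a j)) :
    ∫ t, (∏ j, if c j < t j then 1 else 0) * prodHaar r a t = 0 := by
  obtain ⟨j, hj⟩ := hc
  exact (integral_prod_mul_prodHaar fun j u ↦ if c j < u then 1 else 0).trans
    (prod_eq_zero (mem_univ j) (integral_ite_lt_mul_haar hj))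

end ProductHaar

section Discrepancy

variable {ι : Type*} [Fintype ι] {N : ℕ}

def discrepancyFunction (x : Fin N → ι → ℝ) (t : ι → ℝ) : ℝ :=
  (#{n | ∀ j, x n j < t j} : ℝ) / N - ∏ j, t j

def emptyBoxes (x : Fin N → ι → ℝ) (r : ι → ℕ) : Finset (ι → ℕ) :=
  {a ∈ dyadicBoxes r | ∀ n, ∃ j, x n j ∉ dyadicInterval (r j) (a j)}

variable (x : Fin N → ι → ℝ) {r a : ι → ℕ}

theorem card_filter_eq_sum_prod (t : ι → ℝ) :
    (#{n | ∀ j, x n j < t j} : ℝ) = ∑ n, ∏ j, if x n j < t j then 1 else 0 := by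
  rw [card_filter]
  push_cast
  simp_rw [prod_boole, mem_univ, true_imp_iff]

theorem measurable_discrepancyFunction : Measurable (discrepancyFunction x) := by
  unfold discrepancyFunction
  simp_rw [card_filter_eq_sum_prod]
  refine ((Finset.measurable_sum _ fun n _ ↦ Finset.measurable_prod _ fun j _ ↦ ?_).div_const
    _).sub (Finset.measurable_prod _ fun j _ ↦ measurable_pi_apply j)
  exact Measurable.ite (measurableSet_lt measurable_const (measurable_pi_apply j))
    measurable_const measurable_const

theorem abs_discrepancyFunction_le_one {t : ι → ℝ} (ht : t ∈ unitCube ι) :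
    |discrepancyFunction x t| ≤ 1 := by
  have ht' (j : ι) : t j ∈ Set.Icc 0 1 := ht j (Set.mem_univ j)
  refine abs_sub_le_of_nonneg_of_le (by positivity) (div_le_one_of_le₀ ?_ (by positivity))
    (prod_nonneg fun j _ ↦ (ht' j).1) (prod_le_one (fun j _ ↦ (ht' j).1) fun j _ ↦ (ht' j).2)
  exact_mod_cast (card_filter_le _ _).trans (card_univ.trans (Fintype.card_fin N)).le

theorem memLp_discrepancyFunction :
    MemLp (discrepancyFunction x) 2 (volume.restrict (unitCube ι)) :=
  .of_bound (measurable_discrepancyFunction x).aestronglyMeasurable 1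
    ((ae_restrict_iff' measurableSet_unitCube).2
      (ae_of_all _ fun _ ht ↦ abs_discrepancyFunction_le_one x ht))

/-- Each point lies in at most one box of a given shape, so at most `N` boxes are nonempty. -/
theorem two_pow_le_card_emptyBoxes_add (r : ι → ℕ) : 2 ^ ∑ j, r j ≤ #(emptyBoxes x r) + N := by
  set boxOf : Fin N → ι → ℕ := fun n j ↦ ⌊x n j * 2 ^ r j⌋.toNat
  have hsub : dyadicBoxes r ⊆ emptyBoxes x r ∪ univ.image boxOf := fun a ha ↦ by
    by_cases he : a ∈ emptyBoxes x r
    · exact mem_union_left _ he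
    · obtain ⟨n, hn⟩ : ∃ n, ∀ j, x n j ∈ dyadicInterval (r j) (a j) := by
        simpa [emptyBoxes, ha] using he
      refine mem_union_right _ (mem_image.2 ⟨n, mem_univ n, funext fun j ↦ ?_⟩)
      simp [boxOf, mem_dyadicInterval_iff_floor.1 (hn j)]
  calc 2 ^ ∑ j, r j = #(dyadicBoxes r) := (card_dyadicBoxes r).symm
    _ ≤ #(emptyBoxes x r) + #(univ.image boxOf) := (card_le_card hsub).trans (card_union_le _ _)
    _ ≤ #(emptyBoxes x r) + N := by
      gcongr
      exact card_image_le.trans (card_univ.trans (Fintype.card_fin N)).le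

/-- On an empty box the Haar function sees only the volume term of the discrepancy function. -/
theorem integral_discrepancyFunction_mul_prodHaar (ha : a ∈ emptyBoxes x r) :
    ∫ t in unitCube ι, discrepancyFunction x t * prodHaar r a t
      = -((-1) ^ Fintype.card ι / 4 ^ (∑ j, r j + Fintype.card ι)) := by
  obtain ⟨ha, hempty⟩ := mem_filter.1 ha
  have hsplit : (fun t ↦ discrepancyFunction x t * prodHaar r a t) = fun t ↦
      (∑ n, (∏ j, if x n j < t j then 1 else 0) * prodHaar r a t) / N
        - (∏ j, t j) * prodHaar r a t := by
    ext t
    rw [discrepancyFunction, card_filter_eq_sum_prod, sub_mul, div_mul_eq_mul_div, sum_mul]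
  have hind (n : Fin N) :
      Integrable fun t ↦ (∏ j, if x n j < t j then 1 else 0) * prodHaar r a t :=
    integrable_prod_mul_prodHaar fun j ↦ Measure.integrableOn_of_bounded measure_Ico_lt_top.ne
      (Measurable.ite measurableSet_Ioi measurable_const measurable_const).aestronglyMeasurable
      (M := 1) (ae_of_all _ fun u ↦ by split_ifs <;> simp)
  have hid : Integrable fun t ↦ (∏ j, t j) * prodHaar r a t :=
    integrable_prod_mul_prodHaar fun j ↦
      continuous_id.integrableOn_Icc.mono_set Set.Ico_subset_Icc_self
  rw [setIntegral_unitCube_mul_prodHaar ha, hsplit, integral_sub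
    ((integrable_finsetSum _ fun n _ ↦ hind n).div_const _) hid, integral_div,
    integral_finsetSum _ fun n _ ↦ hind n,
    sum_eq_zero fun n _ ↦ integral_prod_ite_lt_mul_prodHaar (hempty n),
    integral_prod_apply_mul_prodHaar, zero_div, zero_sub]

theorem card_mul_le_card_sigma_emptyBoxes {n : ℕ} (R : Finset (ι → ℕ))
    (hR : ∀ r ∈ R, ∑ j, r j = n) : #R * ((2 : ℝ) ^ n - N) ≤ #(R.sigma (emptyBoxes x)) := by
  rw [card_sigma, Nat.cast_sum, ← nsmul_eq_mul]
  refine card_nsmul_le_sum _ _ _ fun r hr ↦ ?_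
  have := two_pow_le_card_emptyBoxes_add x r
  rw [hR r hr] at this
  rw [sub_le_iff_le_add]
  exact_mod_cast this

end Discrepancy

theorem pow_le_card_antidiagonalTuple {m n q : ℕ} (h : m * q ≤ n) :
    (q + 1) ^ m ≤ #(Nat.antidiagonalTuple (m + 1) n) := by
  calc (q + 1) ^ m = #(Fintype.piFinset fun _ : Fin m ↦ range (q + 1)) := by simp
    _ ≤ _ := card_le_card_of_injOn (fun b ↦ Fin.cons (n - ∑ i, b i) b) (fun b hb ↦ ?_)
      fun b _ b' _ hbb' ↦ by simpa using congrArg Fin.tail hbb'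
  have : ∑ i, b i ≤ m * q := by
    simpa using sum_le_card_nsmul univ b q fun i _ ↦
      Nat.lt_succ_iff.1 (mem_range.1 (Fintype.mem_piFinset.1 hb i))
  rw [mem_coe, Nat.mem_antidiagonalTuple, Fin.sum_cons]
  omega

theorem div_pow_le_card_antidiagonalTuple {m : ℕ} (hm : 1 ≤ m) (n : ℕ) :
    ((n : ℝ) / m) ^ m ≤ #(Nat.antidiagonalTuple (m + 1) n) := by
  have hq : (n : ℝ) / m ≤ (n / m : ℕ) + 1 := by
    rw [div_le_iff₀ (by positivity)]
    exact_mod_cast (Nat.lt_div_mul_add (a := n) hm).le.trans_eq (by ring)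
  calc ((n : ℝ) / m) ^ m ≤ ((n / m : ℕ) + 1 : ℝ) ^ m := by gcongr
    _ ≤ _ := by exact_mod_cast pow_le_card_antidiagonalTuple (Nat.mul_div_le n m)

theorem card_mul_le_integral_discrepancyFunction_sq {ι : Type*} [Fintype ι] {N n : ℕ}
    (x : Fin N → ι → ℝ) (R : Finset (ι → ℕ)) (hR : ∀ r ∈ R, ∑ j, r j = n) :
    #R * ((2 : ℝ) ^ n - N)
      ≤ 8 ^ n * 16 ^ Fintype.card ι * ∫ t in unitCube ι, discrepancyFunction x t ^ 2 := by
  set s := Fintype.card ι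
  set S := R.sigma (emptyBoxes x)
  have hboxes {p} (hp : p ∈ S) : p.2 ∈ dyadicBoxes p.1 :=
    (mem_filter.1 (mem_sigma.1 hp).2).1
  have hbessel := card_mul_sq_le_mul_integral_mul_self S (h := fun p ↦ prodHaar p.1 p.2)
    (σ := 1 / 2 ^ n) (ε := -((-1) ^ s / 4 ^ (n + s))) (memLp_discrepancyFunction x)
    (fun p _ ↦ memLp_prodHaar _ p.1 p.2) (by positivity)
    (fun p _ q hq hpq ↦ by
      rw [setIntegral_unitCube_mul_prodHaar (hboxes hq)]
      exact integral_prodHaar_mul_prodHaar_of_ne fun h ↦ hpq (Sigma.ext (congrArg Prod.fst h)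
        (heq_of_eq (congrArg Prod.snd h))))
    (fun p hp ↦ by
      rw [setIntegral_unitCube_mul_prodHaar (hboxes hp), integral_prodHaar_mul_self,
        hR _ (mem_sigma.1 hp).1])
    (fun p hp ↦ by
      rw [integral_discrepancyFunction_mul_prodHaar x (mem_sigma.1 hp).2, hR _ (mem_sigma.1 hp).1])
  have hε : (-((-1) ^ s / 4 ^ (n + s)) : ℝ) ^ 2 = 1 / 16 ^ (n + s) := by
    rw [neg_sq, div_pow, ← pow_mul, mul_comm, pow_mul, neg_one_sq, one_pow, ← pow_mul,
      mul_comm, pow_mul]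
    norm_num
  rw [hε] at hbessel
  simp_rw [sq]
  have h16 : (16 : ℝ) ^ (n + s) = 8 ^ n * 16 ^ s * 2 ^ n := by
    rw [pow_add, show (16 : ℝ) = 8 * 2 by norm_num, mul_pow]; ring
  calc #R * ((2 : ℝ) ^ n - N) ≤ #S := card_mul_le_card_sigma_emptyBoxes x R hR
    _ = #S * (1 / 16 ^ (n + s)) * 16 ^ (n + s) := by field_simp
    _ ≤ 1 / 2 ^ n * (∫ t in unitCube ι, discrepancyFunction x t * discrepancyFunction x t)
        * 16 ^ (n + s) := by gcongr
    _ = _ := by rw [h16]; field_simp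

theorem log_pow_le_mul_integral_discrepancyFunction_sq {m N : ℕ} (hm : 1 ≤ m) (hN : 1 ≤ N)
    (x : Fin N → Fin (m + 1) → ℝ) :
    Real.log N ^ m ≤ 32 * 16 ^ (m + 1) * m ^ m * N ^ 2
      * ∫ t in unitCube (Fin (m + 1)), discrepancyFunction x t ^ 2 := by
  set n := Nat.log 2 N + 2
  set R := Nat.antidiagonalTuple (m + 1) n
  have hlt := Nat.lt_pow_succ_log_self one_lt_two N
  have hle := Nat.pow_log_le_self 2 (Nat.one_le_iff_ne_zero.1 hN)
  have h2N : 2 * (N : ℝ) ≤ 2 ^ n := by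
    exact_mod_cast (show 2 * N ≤ 2 ^ n by rw [pow_succ] at hlt ⊢; omega)
  have h4N : (2 : ℝ) ^ n ≤ 4 * N := by
    exact_mod_cast (show 2 ^ n ≤ 4 * N by rw [pow_add]; omega)
  have hroth := card_mul_le_integral_discrepancyFunction_sq x R
    fun r hr ↦ Nat.mem_antidiagonalTuple.1 hr
  rw [Fintype.card_fin, show (8 : ℝ) ^ n = (2 ^ n) ^ 2 * 2 ^ n by
    rw [← pow_mul, ← pow_add, show n * 2 + n = 3 * n by ring, pow_mul]; norm_num] at hroth
  set I := ∫ t in unitCube (Fin (m + 1)), discrepancyFunction x t ^ 2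
  have hI : 0 ≤ I := setIntegral_nonneg measurableSet_unitCube fun t _ ↦ sq_nonneg _
  have hR : (#R : ℝ) ≤ 32 * 16 ^ (m + 1) * N ^ 2 * I := by
    have h2n : (0 : ℝ) < 2 ^ n := by positivity
    have : (#R : ℝ) * 2 ^ n ≤ 2 * ((2 ^ n) ^ 2 * 2 ^ n * 16 ^ (m + 1) * I) := by
      nlinarith [Nat.cast_nonneg (α := ℝ) #R]
    calc (#R : ℝ) ≤ 2 * (2 ^ n) ^ 2 * (16 ^ (m + 1) * I) := by nlinarith
      _ ≤ 2 * (4 * N) ^ 2 * (16 ^ (m + 1) * I) := by gcongr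
      _ = _ := by ring
  have hlog : Real.log N ≤ n := by
    calc Real.log N ≤ Real.log (2 ^ n) := Real.log_le_log (by positivity) (by linarith)
      _ = n * Real.log 2 := by rw [Real.log_pow]
      _ ≤ n := mul_le_of_le_one_right (by positivity) (Real.log_two_lt_d9.le.trans (by norm_num))
  calc Real.log N ^ m ≤ (n : ℝ) ^ m := by gcongr
    _ = m ^ m * ((n : ℝ) / m) ^ m := by rw [← mul_pow]; field_simp
    _ ≤ m ^ m * #R := by gcongr; exact div_pow_le_card_antidiagonalTuple hm n
    _ ≤ m ^ m * (32 * 16 ^ (m + 1) * N ^ 2 * I) := by gcongr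
    _ = _ := by ring

end

/-- Roth's lower bound for the `L₂` discrepancy: in dimension `s ≥ 2` there is `c_s > 0`
such that every `N`-point set in `[0,1)^s` with `N ≥ 2` has
`L_{2,N} ≥ c_s (log N)^{(s-1)/2} / N`. -/
theorem roth_L2_lower_bound (s : ℕ) (hs : 2 ≤ s) :
    ∃ c : ℝ, 0 < c ∧ ∀ N : ℕ, 2 ≤ N → ∀ x : Fin N → Fin s → ℝ,
      (∀ n j, x n j ∈ Set.Ico (0 : ℝ) 1) →
      c * (Real.log N) ^ ((s - 1 : ℝ) / 2) / N ≤
        Real.sqrt (∫ t in (Set.univ.pi fun _ : Fin s => Set.Icc (0 : ℝ) 1),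
          (((Finset.univ.filter fun n => ∀ j, x n j < t j).card : ℝ) / N - ∏ j, t j) ^ 2) := by
  obtain ⟨m, rfl⟩ : ∃ m, s = m + 1 := ⟨s - 1, by omega⟩
  set C : ℝ := 32 * 16 ^ (m + 1) * m ^ m
  have hC : 0 < C := mul_pos (by positivity) (pow_pos (by exact_mod_cast (by omega : 0 < m)) m)
  refine ⟨1 / √C, by positivity, fun N hN x _ ↦ ?_⟩
  -- the two integrands differ only in the `Decidable` instance used by the filter
  refine le_of_le_of_eq ?_ (by simp only [discrepancyFunction, unitCube]; congr! :
    √(∫ t in unitCube (Fin (m + 1)), discrepancyFunction x t ^ 2) = _)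
  have hlog : 0 ≤ Real.log N := Real.log_natCast_nonneg N
  have hpow : (Real.log N ^ (((m + 1 : ℕ) - 1 : ℝ) / 2)) ^ 2 = Real.log N ^ m := by
    rw [← Real.rpow_natCast _ 2, ← Real.rpow_mul hlog, ← Real.rpow_natCast]
    congr 1
    push_cast
    ring
  rw [Real.le_sqrt (by positivity) (setIntegral_nonneg measurableSet_unitCube
    fun t _ ↦ sq_nonneg _), div_pow, mul_pow, hpow, div_pow, one_pow, Real.sq_sqrt hC.le,
    div_mul_eq_mul_div, one_mul, div_div, div_le_iff₀ (by positivity)]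
  exact (log_pow_le_mul_integral_discrepancyFunction_sq (by omega) (by omega) x).trans_eq
    (by ring)
end

section
/- (Proĭnov transference principle) Let s ≥ 1 and p ∈ [1, ∞]. Suppose there is a constant c > 0 such that every finite N-point set in [0,1)^{s+1} has L_p discrepancy at least c (log N)^{α} / N for all N ≥ 2. Then there is a constant C > 0 such that every infinite sequence S in [0,1)^s satisfies L_{p,N}(S) ≥ C (log N)^{α} / N for infinitely many N. -/
open scoped Classical
open MeasureTheory Filter

/-- Local discrepancy function of a finite point set `x : Fin N → Fin d → ℝ` in `[0,1)^d`. -/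
noncomputable def locDiscFin (d N : ℕ) (x : Fin N → Fin d → ℝ) (t : Fin d → ℝ) : ℝ :=
  ((Finset.univ.filter fun n => ∀ j, x n j < t j).card : ℝ) / N - ∏ j, t j

/-- Local discrepancy function of the first `N` terms of a sequence in `[0,1)^d`. -/
noncomputable def locDiscSeq (d : ℕ) (x : ℕ → Fin d → ℝ) (N : ℕ) (t : Fin d → ℝ) : ℝ :=
  (((Finset.range N).filter fun n => ∀ j, x n j < t j).card : ℝ) / N - ∏ j, t j

/-- The measure on `[0,1]^d` used for `L_p` discrepancy. -/
noncomputable def cubeMeasure (d : ℕ) : Measure (Fin d → ℝ) :=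
  volume.restrict (Set.univ.pi fun _ : Fin d => Set.Icc (0 : ℝ) 1)

/-!
Suppose `S` had `L_{p,N}(S) < (c/2) (log N)^α / N` for all large `N`, and take the point set
`P_N = {(n/N, x_n) : n < N}` in dimension `s + 1`. The box `[0,u) × [0,t)` contains exactly the
points with `n < m := ⌈uN⌉` and `x_n ∈ [0,t)`, so `Δ_{P_N}(u,t) = (m/N) Δ_{S,m}(t)` up to an error
of at most `1/N`. Bounding the `L_p` norm over `[0,1]^{s+1}` slice by slice in `u` gives
`L_p(P_N) ≤ max_{m ≤ N} (m/N) L_{p,m}(S) + 1/N ≤ ((c/2) (log N)^α + O(1)) / N`, where small `m`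
contribute `O(1/N)` through the trivial bound `|Δ| ≤ 1`. For large `N` this contradicts the
lower bound `c (log N)^α / N` for `P_N`.
-/

instance isProbabilityMeasure_volume_restrict_Icc_zero_one :
    IsProbabilityMeasure (volume.restrict (Set.Icc (0 : ℝ) 1)) :=
  ⟨by simp [Real.volume_Icc]⟩

lemma cubeMeasure_eq_pi (d : ℕ) :
    cubeMeasure d = Measure.pi fun _ : Fin d => volume.restrict (Set.Icc (0 : ℝ) 1) :=
  Measure.restrict_pi_pi _ _

instance isProbabilityMeasure_cubeMeasure (d : ℕ) : IsProbabilityMeasure (cubeMeasure d) := by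
  rw [cubeMeasure_eq_pi]
  infer_instance

lemma measurePreserving_piFinSuccAbove_cubeMeasure (s : ℕ) :
    MeasurePreserving (MeasurableEquiv.piFinSuccAbove (fun _ : Fin (s + 1) => ℝ) 0)
      (cubeMeasure (s + 1)) ((volume.restrict (Set.Icc (0 : ℝ) 1)).prod (cubeMeasure s)) := by
  rw [cubeMeasure_eq_pi, cubeMeasure_eq_pi]
  exact measurePreserving_piFinSuccAbove (fun _ => volume.restrict (Set.Icc (0 : ℝ) 1)) 0

lemma measurable_finCons_prod (s : ℕ) :
    Measurable fun z : ℝ × (Fin s → ℝ) => (Fin.cons z.1 z.2 : Fin (s + 1) → ℝ) := by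
  fun_prop

lemma eLpNorm_cubeMeasure_succ {s : ℕ} {f : (Fin (s + 1) → ℝ) → ℝ} (hf : Measurable f)
    (p : ENNReal) :
    eLpNorm f p (cubeMeasure (s + 1)) =
      eLpNorm (fun z : ℝ × (Fin s → ℝ) => f (Fin.cons z.1 z.2)) p
        ((volume.restrict (Set.Icc (0 : ℝ) 1)).prod (cubeMeasure s)) := by
  have hg : Measurable fun z : ℝ × (Fin s → ℝ) => f (Fin.cons z.1 z.2) :=
    hf.comp (measurable_finCons_prod s)
  rw [← eLpNorm_comp_measurePreserving hg.aestronglyMeasurable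
    (measurePreserving_piFinSuccAbove_cubeMeasure s)]
  congr 1
  funext y
  simp

lemma measurableSet_forall_lt {d : ℕ} (a : Fin d → ℝ) :
    MeasurableSet {t : Fin d → ℝ | ∀ j, a j < t j} := by
  simpa [Set.pi] using MeasurableSet.univ_pi fun j => measurableSet_Ioi (a := a j)

lemma measurable_card_filter_forall_lt {ι : Type*} {d : ℕ} (S : Finset ι)
    (a : ι → Fin d → ℝ) :
    Measurable fun t : Fin d → ℝ => ((S.filter fun n => ∀ j, a n j < t j).card : ℝ) := by
  simp_rw [Finset.card_filter]
  push_cast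
  exact Finset.measurable_sum _ fun n _ =>
    Measurable.ite (measurableSet_forall_lt (a n)) measurable_const measurable_const

lemma measurable_locDiscFin (d N : ℕ) (x : Fin N → Fin d → ℝ) :
    Measurable (locDiscFin d N x) :=
  ((measurable_card_filter_forall_lt _ x).div_const _).sub (by fun_prop)

lemma measurable_locDiscSeq (d : ℕ) (x : ℕ → Fin d → ℝ) (N : ℕ) :
    Measurable (locDiscSeq d x N) :=
  ((measurable_card_filter_forall_lt _ x).div_const _).sub (by fun_prop)

lemma prod_mem_Icc_of_mem_cube {d : ℕ} {t : Fin d → ℝ}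
    (ht : t ∈ Set.univ.pi fun _ : Fin d => Set.Icc (0 : ℝ) 1) :
    ∏ j, t j ∈ Set.Icc (0 : ℝ) 1 :=
  ⟨Finset.prod_nonneg fun j _ => (ht j trivial).1,
    Finset.prod_le_one (fun j _ => (ht j trivial).1) fun j _ => (ht j trivial).2⟩

lemma abs_locDiscSeq_le_one {d : ℕ} (x : ℕ → Fin d → ℝ) (N : ℕ) {t : Fin d → ℝ}
    (ht : t ∈ Set.univ.pi fun _ : Fin d => Set.Icc (0 : ℝ) 1) :
    |locDiscSeq d x N t| ≤ 1 := by
  have hfrac : (((Finset.range N).filter fun n => ∀ j, x n j < t j).card : ℝ) / N ∈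
      Set.Icc (0 : ℝ) 1 := by
    refine ⟨by positivity, div_le_one_of_le₀ ?_ N.cast_nonneg⟩
    exact_mod_cast (Finset.card_filter_le _ _).trans (Finset.card_range N).le
  have hprod := prod_mem_Icc_of_mem_cube ht
  rw [locDiscSeq, abs_sub_le_iff]
  constructor <;> linarith [hfrac.1, hfrac.2, hprod.1, hprod.2]

lemma eLpNorm_locDiscSeq_le_one (d : ℕ) (x : ℕ → Fin d → ℝ) (N : ℕ) (p : ENNReal) :
    eLpNorm (locDiscSeq d x N) p (cubeMeasure d) ≤ 1 := by
  have hbound : ∀ᵐ t ∂cubeMeasure d, ‖locDiscSeq d x N t‖ ≤ 1 := by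
    filter_upwards [ae_restrict_mem (MeasurableSet.univ_pi fun _ => measurableSet_Icc)] with t ht
    exact abs_locDiscSeq_le_one x N ht
  simpa using eLpNorm_le_of_ae_bound (p := p) hbound

noncomputable def seqPointSet {s : ℕ} (x : ℕ → Fin s → ℝ) (N : ℕ) : Fin N → Fin (s + 1) → ℝ :=
  fun n => Fin.cons ((n : ℝ) / N) (x n)

lemma seqPointSet_mem_Ico {s : ℕ} {x : ℕ → Fin s → ℝ} (hx : ∀ n j, x n j ∈ Set.Ico (0 : ℝ) 1)
    (N : ℕ) (n : Fin N) (j : Fin (s + 1)) : seqPointSet x N n j ∈ Set.Ico (0 : ℝ) 1 := by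
  cases j using Fin.cases with
  | zero =>
    have hN : (0 : ℝ) < N := by exact_mod_cast n.pos
    simp only [seqPointSet, Fin.cons_zero]
    exact ⟨by positivity, (div_lt_one hN).2 (by exact_mod_cast n.isLt)⟩
  | succ j => simpa [seqPointSet] using hx n j

lemma card_filter_seqPointSet {s N : ℕ} (x : ℕ → Fin s → ℝ) (hN : 0 < N) {u : ℝ} (hu : u ≤ 1)
    (t : Fin s → ℝ) :
    (Finset.univ.filter fun n : Fin N =>
        ∀ j, seqPointSet x N n j < (Fin.cons u t : Fin (s + 1) → ℝ) j).card =
      ((Finset.range ⌈u * N⌉₊).filter fun n => ∀ j, x n j < t j).card := by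
  have hNR : (0 : ℝ) < N := by exact_mod_cast hN
  have hmN : ⌈u * N⌉₊ ≤ N := Nat.ceil_le.2 (by nlinarith)
  have hmem : ∀ n : Fin N, (∀ j, seqPointSet x N n j < (Fin.cons u t : Fin (s + 1) → ℝ) j) ↔
      n.val < ⌈u * N⌉₊ ∧ ∀ j, x n j < t j := by
    intro n
    simp [Fin.forall_fin_succ, seqPointSet, Nat.lt_ceil, div_lt_iff₀ hNR]
  refine Finset.card_bij (fun n _ => n.val) (fun n hn => ?_) (fun _ _ _ _ => Fin.ext)
    fun k hk => ?_
  · simpa [hmem] using hn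
  · simp only [Finset.mem_filter, Finset.mem_range] at hk
    exact ⟨⟨k, hk.1.trans_le hmN⟩, by simpa [hmem] using hk, rfl⟩

lemma locDiscFin_seqPointSet_cons {s N : ℕ} (x : ℕ → Fin s → ℝ) (hN : 0 < N) {u : ℝ}
    (hu : u ≤ 1) (t : Fin s → ℝ) :
    locDiscFin (s + 1) N (seqPointSet x N) (Fin.cons u t) =
      (⌈u * N⌉₊ / N : ℝ) * locDiscSeq s x ⌈u * N⌉₊ t + (⌈u * N⌉₊ / N - u) * ∏ j, t j := by
  rw [locDiscFin, card_filter_seqPointSet x hN hu, Fin.prod_univ_succ, locDiscSeq]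
  simp only [Fin.cons_zero, Fin.cons_succ]
  rcases Nat.eq_zero_or_pos ⌈u * N⌉₊ with hm | hm
  · simp [hm]
  · field_simp
    ring

lemma abs_locDiscFin_seqPointSet_cons_le {s N : ℕ} (x : ℕ → Fin s → ℝ) (hN : 0 < N) {u : ℝ}
    (hu : u ∈ Set.Icc (0 : ℝ) 1) {t : Fin s → ℝ}
    (ht : t ∈ Set.univ.pi fun _ : Fin s => Set.Icc (0 : ℝ) 1) :
    |locDiscFin (s + 1) N (seqPointSet x N) (Fin.cons u t)| ≤
      (⌈u * N⌉₊ / N : ℝ) * |locDiscSeq s x ⌈u * N⌉₊ t| + 1 / N := by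
  have hNR : (0 : ℝ) < N := by exact_mod_cast hN
  have hround : (⌈u * N⌉₊ / N - u : ℝ) ∈ Set.Icc (0 : ℝ) (1 / N) := by
    have := Nat.ceil_lt_add_one (mul_nonneg hu.1 hNR.le)
    constructor
    · rw [sub_nonneg, le_div_iff₀ hNR]
      exact Nat.le_ceil _
    · rw [sub_le_iff_le_add, div_add' _ _ _ hNR.ne', div_le_div_iff_of_pos_right hNR]
      linarith
  have hprod := prod_mem_Icc_of_mem_cube ht
  rw [locDiscFin_seqPointSet_cons x hN hu.2]
  calc _ ≤ |(⌈u * N⌉₊ / N : ℝ) * locDiscSeq s x ⌈u * N⌉₊ t| +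
        |(⌈u * N⌉₊ / N - u : ℝ) * ∏ j, t j| := abs_add_le _ _
    _ ≤ _ := by
      rw [abs_mul, abs_mul, abs_of_nonneg (by positivity), abs_of_nonneg hround.1,
        abs_of_nonneg hprod.1]
      gcongr
      calc _ ≤ 1 / (N : ℝ) * 1 := mul_le_mul hround.2 hprod.2 hprod.1 (by positivity)
        _ = 1 / N := mul_one _

lemma eLpNorm_locDiscFin_seqPointSet_slice_le {s N : ℕ} (x : ℕ → Fin s → ℝ) (hN : 0 < N)
    {p : ENNReal} (hp : 1 ≤ p) {u : ℝ} (hu : u ∈ Set.Icc (0 : ℝ) 1) :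
    eLpNorm (fun t => locDiscFin (s + 1) N (seqPointSet x N) (Fin.cons u t)) p (cubeMeasure s) ≤
      ENNReal.ofReal (⌈u * N⌉₊ / N) * eLpNorm (locDiscSeq s x ⌈u * N⌉₊) p (cubeMeasure s) +
        ENNReal.ofReal (1 / N) := by
  set m := ⌈u * N⌉₊
  have hbound : ∀ᵐ t ∂cubeMeasure s, ‖locDiscFin (s + 1) N (seqPointSet x N) (Fin.cons u t)‖ ≤
      (m / N : ℝ) • ‖locDiscSeq s x m t‖ + 1 / N := by
    filter_upwards [ae_restrict_mem (MeasurableSet.univ_pi fun _ => measurableSet_Icc)] with t ht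
    exact abs_locDiscFin_seqPointSet_cons_le x hN hu ht
  have hmeas :
      AEStronglyMeasurable (fun t => (m / N : ℝ) • ‖locDiscSeq s x m t‖) (cubeMeasure s) :=
    ((measurable_locDiscSeq s x m).norm.const_smul (m / N : ℝ)).aestronglyMeasurable
  calc _ ≤ eLpNorm (fun t => (m / N : ℝ) • ‖locDiscSeq s x m t‖ + 1 / N) p (cubeMeasure s) :=
        eLpNorm_mono_ae_real hbound
    _ ≤ eLpNorm (fun t => (m / N : ℝ) • ‖locDiscSeq s x m t‖) p (cubeMeasure s) +
        eLpNorm (fun _ => (1 / N : ℝ)) p (cubeMeasure s) :=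
        eLpNorm_add_le hmeas aestronglyMeasurable_const hp
    _ = _ := by
      rw [show (fun t => (m / N : ℝ) • ‖locDiscSeq s x m t‖) =
          (m / N : ℝ) • fun t => ‖locDiscSeq s x m t‖ from rfl, eLpNorm_const_smul, eLpNorm_norm,
        eLpNorm_const _ (zero_lt_one.trans_le hp).ne' (IsProbabilityMeasure.ne_zero _),
        measure_univ, ENNReal.one_rpow, mul_one, Real.enorm_eq_ofReal (by positivity),
        Real.enorm_eq_ofReal (by positivity)]

lemma eLpNorm_prod_le_of_ae_eLpNorm_slice_le {X Y E : Type*} [MeasurableSpace X]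
    [MeasurableSpace Y] [NormedAddCommGroup E] [MeasurableSpace E] [OpensMeasurableSpace E]
    {μ : Measure X} [IsProbabilityMeasure μ] {ν : Measure Y} [SFinite ν] {p : ENNReal}
    {F : X × Y → E} (hF : Measurable F) {K : ENNReal}
    (h : ∀ᵐ u ∂μ, eLpNorm (fun y => F (u, y)) p ν ≤ K) :
    eLpNorm F p (μ.prod ν) ≤ K := by
  rcases eq_or_ne p 0 with rfl | hp0
  · simp
  rcases eq_or_ne p ⊤ with rfl | hptop
  · simp only [eLpNorm_exponent_top] at h ⊢
    refine essSup_le_of_ae_le _ ((Measure.ae_prod_iff_ae_ae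
      (measurableSet_le hF.enorm measurable_const)).2 ?_)
    filter_upwards [h] with u hu
    exact ae_le_eLpNormEssSup.mono fun y hy => hy.trans hu
  have hr : 0 < p.toReal := ENNReal.toReal_pos hp0 hptop
  have hslice : ∀ᵐ u ∂μ, ∫⁻ y, ‖F (u, y)‖ₑ ^ p.toReal ∂ν ≤ K ^ p.toReal := by
    filter_upwards [h] with u hu
    rw [eLpNorm_eq_lintegral_rpow_enorm_toReal hp0 hptop] at hu
    simpa [← ENNReal.rpow_mul, hr.ne'] using ENNReal.rpow_le_rpow hu hr.le
  rw [eLpNorm_eq_lintegral_rpow_enorm_toReal hp0 hptop]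
  calc (∫⁻ z, ‖F z‖ₑ ^ p.toReal ∂μ.prod ν) ^ (1 / p.toReal)
      ≤ (∫⁻ _, K ^ p.toReal ∂μ) ^ (1 / p.toReal) := by
        gcongr
        exact (lintegral_prod_le _).trans (lintegral_mono_ae hslice)
    _ = K := by simp [← ENNReal.rpow_mul, hr.ne']

lemma eLpNorm_locDiscFin_seqPointSet_le {s N : ℕ} (x : ℕ → Fin s → ℝ) (hN : 0 < N)
    {p : ENNReal} (hp : 1 ≤ p) {K : ENNReal}
    (hK : ∀ m ≤ N, ENNReal.ofReal (m / N) * eLpNorm (locDiscSeq s x m) p (cubeMeasure s) ≤ K) :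
    eLpNorm (locDiscFin (s + 1) N (seqPointSet x N)) p (cubeMeasure (s + 1)) ≤
      K + ENNReal.ofReal (1 / N) := by
  have hmeas := measurable_locDiscFin (s + 1) N (seqPointSet x N)
  rw [eLpNorm_cubeMeasure_succ hmeas]
  refine eLpNorm_prod_le_of_ae_eLpNorm_slice_le (hmeas.comp (measurable_finCons_prod s)) ?_
  filter_upwards [ae_restrict_mem measurableSet_Icc] with u hu
  have hmN : ⌈u * N⌉₊ ≤ N := Nat.ceil_le.2 (mul_le_of_le_one_left N.cast_nonneg hu.2)
  exact (eLpNorm_locDiscFin_seqPointSet_slice_le x hN hp hu).trans (by gcongr; exact hK _ hmN)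

lemma ofReal_div_mul_eLpNorm_locDiscSeq_le {s : ℕ} {x : ℕ → Fin s → ℝ} {p : ENNReal}
    {α c : ℝ} (hα : 0 ≤ α) (hc : 0 ≤ c) {M N m : ℕ} (hmN : m ≤ N)
    (hsmall : ∀ n, M ≤ n → 2 ≤ n →
      eLpNorm (locDiscSeq s x n) p (cubeMeasure s) ≤ ENNReal.ofReal (c * Real.log n ^ α / n)) :
    ENNReal.ofReal (m / N) * eLpNorm (locDiscSeq s x m) p (cubeMeasure s) ≤
      ENNReal.ofReal ((c * Real.log N ^ α + max M 2) / N) := by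
  rcases lt_or_ge m (max M 2) with hm | hm
  · calc _ ≤ ENNReal.ofReal (m / N) * 1 := by gcongr; exact eLpNorm_locDiscSeq_le_one s x m p
      _ ≤ _ := by
        have hlog := Real.rpow_nonneg (Real.log_natCast_nonneg N) α
        rw [mul_one]
        gcongr
        exact le_add_of_nonneg_of_le (mul_nonneg hc hlog) (by exact_mod_cast hm.le)
  · have hm2 : 2 ≤ m := le_of_max_le_right hm
    have hmR : (0 : ℝ) < m := by positivity
    have hlog : Real.log m ^ α ≤ Real.log N ^ α :=
      Real.rpow_le_rpow (Real.log_nonneg (by exact_mod_cast (by omega : 1 ≤ m)))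
        (Real.log_le_log hmR (by exact_mod_cast hmN)) hα
    calc _ ≤ ENNReal.ofReal (m / N) * ENNReal.ofReal (c * Real.log m ^ α / m) := by
          gcongr
          exact hsmall m (le_of_max_le_left hm) hm2
      _ = ENNReal.ofReal (c * Real.log m ^ α / N) := by
          rw [← ENNReal.ofReal_mul (by positivity)]
          congr 1
          field_simp
      _ ≤ _ := by
          gcongr
          exact le_add_of_le_of_nonneg (mul_le_mul_of_nonneg_left hlog hc) (by positivity)

lemma exists_ge_and_lt_log_rpow {α : ℝ} (hα : 0 < α) (A : ℝ) (M : ℕ) :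
    ∃ N : ℕ, M ≤ N ∧ A < Real.log N ^ α :=
  ((eventually_ge_atTop M).and ((tendsto_rpow_atTop hα).comp
    (Real.tendsto_log_atTop.comp tendsto_natCast_atTop_atTop) |>.eventually_gt_atTop A)).exists

theorem proinov_transference_general (s : ℕ) (p : ENNReal) (hp : 1 ≤ p)
    (α : ℝ) (hα : 0 < α) (c : ℝ) (hc : 0 < c)
    (hfin : ∀ N : ℕ, 2 ≤ N → ∀ x : Fin N → Fin (s + 1) → ℝ,
      (∀ n j, x n j ∈ Set.Ico (0 : ℝ) 1) →
      ENNReal.ofReal (c * (Real.log N) ^ α / N) ≤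
        eLpNorm (locDiscFin (s + 1) N x) p (cubeMeasure (s + 1))) :
    ∃ C : ℝ, 0 < C ∧ ∀ x : ℕ → Fin s → ℝ, (∀ n j, x n j ∈ Set.Ico (0 : ℝ) 1) →
      ∀ M : ℕ, ∃ N : ℕ, M ≤ N ∧ 2 ≤ N ∧
        ENNReal.ofReal (C * (Real.log N) ^ α / N) ≤
          eLpNorm (locDiscSeq s x N) p (cubeMeasure s) := by
  refine ⟨c / 2, half_pos hc, fun x hx M => ?_⟩
  by_contra! hsmall
  obtain ⟨N, hMN, hlarge⟩ := exists_ge_and_lt_log_rpow hα (2 * (max M 2 + 1) / c) (max M 2)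
  have hN2 : 2 ≤ N := le_of_max_le_right hMN
  have hNR : (0 : ℝ) < N := by positivity
  have hlower := hfin N hN2 (seqPointSet x N) (seqPointSet_mem_Ico hx N)
  have hupper := eLpNorm_locDiscFin_seqPointSet_le x (by omega : 0 < N) hp fun m hm =>
    ofReal_div_mul_eLpNorm_locDiscSeq_le hα.le (half_pos hc).le hm fun n h1 h2 =>
      (hsmall n h1 h2).le
  rw [← ENNReal.ofReal_add (by positivity) (by positivity), ← add_div] at hupper
  have hineq := (ENNReal.ofReal_le_ofReal_iff (by positivity)).1 (hlower.trans hupper)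
  rw [div_le_div_iff_of_pos_right hNR] at hineq
  rw [div_lt_iff₀ hc] at hlarge
  linarith

/-- Proĭnov's transference principle: a lower bound `c (log N)^α / N` for the `L_p`
discrepancy of all finite point sets in dimension `s+1` transfers to a lower bound
`C (log N)^α / N`, for infinitely many `N`, for the `L_p` discrepancy of every infinite
sequence in dimension `s`. -/
theorem proinov_transference (s : ℕ) (hs : 1 ≤ s) (p : ENNReal) (hp : 1 ≤ p)
    (α : ℝ) (hα : 0 < α) (c : ℝ) (hc : 0 < c)
    (hfin : ∀ N : ℕ, 2 ≤ N → ∀ x : Fin N → Fin (s + 1) → ℝ,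
      (∀ n j, x n j ∈ Set.Ico (0 : ℝ) 1) →
      ENNReal.ofReal (c * (Real.log N) ^ α / N) ≤
        eLpNorm (locDiscFin (s + 1) N x) p (cubeMeasure (s + 1))) :
    ∃ C : ℝ, 0 < C ∧ ∀ x : ℕ → Fin s → ℝ, (∀ n j, x n j ∈ Set.Ico (0 : ℝ) 1) →
      ∀ M : ℕ, ∃ N : ℕ, M ≤ N ∧ 2 ≤ N ∧
        ENNReal.ofReal (C * (Real.log N) ^ α / N) ≤
          eLpNorm (locDiscSeq s x N) p (cubeMeasure s) :=
  proinov_transference_general s p hp α hα c hc hfin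
end
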